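/- arXiv:2212.02942 — 4 statements merged into one kernel-verified Lean document; each statement's English description precedes it below -/
import Mathlib

section
/- On the invariant set T = 0 of the system dX/dτ = (1/n)(1+q)X, dΣ/dτ = -(2-q)Σ, with q = -1 + 3Σ² + (3/2)γ(1 - Σ² - X^{2n}), the quantity Σ^γ · X^{(2-γ)n} · (1 - Σ² - X^{2n})^{-1} is conserved along solutions, i.e. its derivative along the flow vanishes wherever it is defined. -/
/-- The deceleration parameter `q` on the `T = 0` boundary. -/
noncomputable def qdec (n : ℕ) (γ X S : ℝ) : ℝ :=
  -1 + 3 * S ^ 2 + (3 / 2) * γ * (1 - S ^ 2 - X ^ (2 * n))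

theorem stmt2 (n : ℕ) (hn : 1 ≤ n) (γ : ℝ) (hγ : γ ∈ Set.Ioo (0 : ℝ) 2)
    (X S : ℝ → ℝ)
    (hreg : ∀ τ, 0 < X τ ∧ 0 < S τ ∧ (X τ) ^ (2 * n) + (S τ) ^ 2 < 1)
    (hX : ∀ τ, HasDerivAt X ((1 / (n : ℝ)) * (1 + qdec n γ (X τ) (S τ)) * X τ) τ)
    (hS : ∀ τ, HasDerivAt S (-(2 - qdec n γ (X τ) (S τ)) * S τ) τ) :
    ∀ τ, HasDerivAt
      (fun t => (S t) ^ γ * (X t) ^ ((2 - γ) * (n : ℝ)) *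
        (1 - (S t) ^ 2 - (X t) ^ (2 * n))⁻¹) 0 τ := by
  intro τ
  obtain ⟨hx0, hs0, hsum⟩ := hreg τ
  have hxpow : 0 < (X τ) ^ (2 * n) := pow_pos hx0 _
  have hn' : (n : ℝ) ≠ 0 := Nat.cast_ne_zero.mpr (by omega)
  have hD : (0:ℝ) < 1 - (S τ)^2 - (X τ)^(2*n) := by nlinarith [sq_nonneg (S τ)]
  have hDne : 1 - (S τ)^2 - (X τ)^(2*n) ≠ 0 := ne_of_gt hD
  have hs' : HasDerivAt (fun t => S t ^ γ)
      ((-(2 - qdec n γ (X τ) (S τ)) * S τ) * γ * S τ ^ (γ - 1)) τ :=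
    (hS τ).rpow_const (Or.inl (ne_of_gt hs0))
  have hx' : HasDerivAt (fun t => X t ^ ((2 - γ) * (n:ℝ)))
      ((1/(n:ℝ) * (1 + qdec n γ (X τ) (S τ)) * X τ) * ((2 - γ) * (n:ℝ)) *
        X τ ^ ((2 - γ) * (n:ℝ) - 1)) τ :=
    (hX τ).rpow_const (Or.inl (ne_of_gt hx0))
  have hden : HasDerivAt (fun t => 1 - S t ^ 2 - X t ^ (2*n))
      (0 - ((2:ℝ) * S τ ^ (2-1) * (-(2 - qdec n γ (X τ) (S τ)) * S τ))
        - ((↑(2*n) : ℝ) * X τ ^ (2*n - 1) * (1/(n:ℝ) * (1 + qdec n γ (X τ) (S τ)) * X τ))) τ :=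
    ((hasDerivAt_const τ (1:ℝ)).sub ((hS τ).pow 2)).sub ((hX τ).pow (2*n))
  have hinv := hden.inv hDne
  have htot := (hs'.mul hx').mul hinv
  convert htot using 1
  case e'_4 => rfl
  case e'_5 => rfl
  case e'_8 => rfl
  simp only [Pi.mul_apply, Pi.inv_apply]
  -- rewrite the rpow/pow differences
  have e1 : S τ ^ (γ - 1) = S τ ^ γ / S τ := by
    rw [Real.rpow_sub hs0, Real.rpow_one]
  have e2 : X τ ^ ((2 - γ) * (n:ℝ) - 1) = X τ ^ ((2 - γ) * (n:ℝ)) / X τ := by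
    rw [Real.rpow_sub hx0, Real.rpow_one]
  have e3 : X τ ^ (2*n - 1) = X τ ^ (2*n) / X τ := by
    rw [pow_sub₀ _ (ne_of_gt hx0) (by omega)]
    simp [div_eq_mul_inv]
  rw [e1, e2, e3]
  have hq : qdec n γ (X τ) (S τ)
      = -1 + 3 * (S τ) ^ 2 + (3 / 2) * γ * (1 - (S τ) ^ 2 - (X τ) ^ (2 * n)) := rfl
  rw [hq]
  push_cast
  field_simp
  ring
end

section
/- For n ∈ ℕ, n ≥ 1, let G(θ) = sqrt(∑_{k=0}^{n-1} cos^{2k}θ) and, for a function f on [0,2π], let ⟨f⟩ = (Γ[(n+1)/(2n)]/(4√π Γ[1+1/(2n)])) ∫₀^{2π} f(θ)/G(θ) dθ, which is the average of f over [0,2π] with respect to the measure dθ/G(θ), normalized so that ⟨1⟩ = 1. Then ⟨2G(θ)²sin²θ⟩ = 2n/(n+1), equivalently ∫₀^{2π} 2 G(θ) sin²θ dθ = (2n/(n+1)) · ∫₀^{2π} (1/G(θ)) dθ. -/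
open Real Finset

lemma polyId' (n : ℕ) (x : ℝ) :
    (1 - 2*x) * (∑ k ∈ Finset.range n, x^k)
      + (1 - x) * (∑ k ∈ Finset.range n, (k:ℝ) * x^k)
      = 1 - (n+1) * x^n := by
  induction n with
  | zero => simp
  | succ m ih =>
    rw [Finset.sum_range_succ, Finset.sum_range_succ]
    push_cast
    rw [pow_succ]
    nlinarith [ih]

lemma polyId (n : ℕ) (x : ℝ) :
    (1 - 2*x) * (∑ k ∈ Finset.range n, x^k)
      + (1 - x) * (x * ∑ k ∈ Finset.range n, (k:ℝ) * x^(k-1))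
      = 1 - (n+1) * x^n := by
  have aux : ∀ k : ℕ, x * ((k:ℝ) * x^(k-1)) = (k:ℝ) * x^k := by
    intro k
    cases k with
    | zero => simp
    | succ m =>
      push_cast
      rw [pow_succ]
      ring
  have hx : x * ∑ k ∈ Finset.range n, (k:ℝ) * x^(k-1)
      = ∑ k ∈ Finset.range n, (k:ℝ) * x^k := by
    rw [Finset.mul_sum]; exact Finset.sum_congr rfl fun k _ => aux k
  rw [hx, polyId']

section main
variable (n : ℕ)

noncomputable def Sf (n : ℕ) : ℝ → ℝ := fun θ => ∑ k ∈ Finset.range n, Real.cos θ ^ (2*k)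

lemma Sf_eq (θ : ℝ) : Sf n θ = ∑ k ∈ Finset.range n, (Real.cos θ ^ 2) ^ k := by
  unfold Sf
  exact Finset.sum_congr rfl fun k _ => (pow_mul _ 2 k)

lemma Sf_one_le (hn : 1 ≤ n) (θ : ℝ) : 1 ≤ Sf n θ := by
  unfold Sf
  calc (1:ℝ) = ∑ k ∈ Finset.range 1, Real.cos θ ^ (2*k) := by simp
  _ ≤ _ := Finset.sum_le_sum_of_subset_of_nonneg
      (Finset.range_subset_range.2 hn) (fun k _ _ => by rw [pow_mul]; positivity)

lemma Sf_pos (hn : 1 ≤ n) (θ : ℝ) : 0 < Sf n θ := lt_of_lt_of_le one_pos (Sf_one_le n hn θ)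

lemma sqrt_Sf_pos (hn : 1 ≤ n) (θ : ℝ) : 0 < Real.sqrt (Sf n θ) :=
  Real.sqrt_pos.2 (Sf_pos n hn θ)

lemma sq_sqrt_Sf (hn : 1 ≤ n) (θ : ℝ) :
    Real.sqrt (Sf n θ) * Real.sqrt (Sf n θ) = Sf n θ :=
  Real.mul_self_sqrt (Sf_pos n hn θ).le

-- telescoping: S * sin^2 = 1 - cos^(2n)
lemma Sf_mul_sin_sq (θ : ℝ) : Sf n θ * Real.sin θ ^ 2 = 1 - Real.cos θ ^ (2*n) := by
  have h := geom_sum_mul (Real.cos θ ^ 2) n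
  rw [Sf_eq]
  have hs : Real.sin θ ^ 2 = 1 - Real.cos θ ^ 2 := Real.sin_sq θ
  rw [hs, pow_mul]
  nlinarith [h]

-- the derivative
lemma hasDeriv_F (hn : 1 ≤ n) (θ : ℝ) :
    HasDerivAt (fun t => -(Real.sin t * Real.cos t * Real.sqrt (Sf n t)))
      ((1 - ((n:ℝ)+1) * Real.cos θ ^ (2*n)) * (Real.sqrt (Sf n θ))⁻¹) θ := by
  have hc : HasDerivAt Real.cos (-Real.sin θ) θ := Real.hasDerivAt_cos θ
  have hsin : HasDerivAt Real.sin (Real.cos θ) θ := Real.hasDerivAt_sin θ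
  have hx : HasDerivAt (fun t => Real.cos t ^ 2)
      ((2:ℕ) * Real.cos θ ^ 1 * (-Real.sin θ)) θ := hc.pow 2
  have hP : HasDerivAt (fun y : ℝ => ∑ k ∈ Finset.range n, y ^ k)
      (∑ k ∈ Finset.range n, (k:ℝ) * (Real.cos θ ^ 2) ^ (k-1)) (Real.cos θ ^ 2) :=
    HasDerivAt.fun_sum fun k _ => hasDerivAt_pow k _
  have hS : HasDerivAt (Sf n)
      ((∑ k ∈ Finset.range n, (k:ℝ) * (Real.cos θ ^ 2) ^ (k-1)) *
        ((2:ℕ) * Real.cos θ ^ 1 * (-Real.sin θ))) θ := by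
    have := hP.comp θ hx
    have e : Sf n = (fun y : ℝ => ∑ k ∈ Finset.range n, y ^ k) ∘ (fun t => Real.cos t ^ 2) :=
      funext fun t => Sf_eq n t
    rw [e]
    exact this
  have hG : HasDerivAt (fun t => Real.sqrt (Sf n t))
      (1 / (2 * Real.sqrt (Sf n θ)) *
        ((∑ k ∈ Finset.range n, (k:ℝ) * (Real.cos θ ^ 2) ^ (k-1)) *
          ((2:ℕ) * Real.cos θ ^ 1 * (-Real.sin θ)))) θ :=
    (Real.hasDerivAt_sqrt (Sf_pos n hn θ).ne').comp θ hS
  have hF := (((hsin.mul hc).mul hG).neg)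
  refine hF.congr_deriv ?_
  symm
  have hg := sqrt_Sf_pos n hn θ
  have hpoly := polyId n (Real.cos θ ^ 2)
  have hsq : Real.sin θ ^ 2 = 1 - Real.cos θ ^ 2 := Real.sin_sq θ
  set g := Real.sqrt (Sf n θ) with hgdef
  set P := ∑ k ∈ Finset.range n, (Real.cos θ ^ 2) ^ k with hPdef
  set Q := ∑ k ∈ Finset.range n, (k:ℝ) * (Real.cos θ ^ 2) ^ (k-1) with hQdef
  have hgg : g * g = P := (sq_sqrt_Sf n hn θ).trans (Sf_eq n θ)
  have hcos2n : Real.cos θ ^ (2*n) = (Real.cos θ ^ 2) ^ n := by rw [pow_mul]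
  rw [hcos2n]
  push_cast
  simp only [Pi.mul_apply]
  field_simp
  linear_combination (-1) * hpoly + (Real.cos θ^2 - Real.sin θ^2) * hgg
    + (-(P + Real.cos θ^2*Q)) * hsq

end main

section final
variable (n : ℕ)

lemma cont_sqrt_Sf : Continuous (fun t => Real.sqrt (Sf n t)) :=
  Real.continuous_sqrt.comp (continuous_finset_sum _ fun k _ => Real.continuous_cos.pow _)

lemma cont_inv_sqrt_Sf (hn : 1 ≤ n) : Continuous (fun t => (Real.sqrt (Sf n t))⁻¹) :=
  (cont_sqrt_Sf n).inv₀ fun t => (sqrt_Sf_pos n hn t).ne'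

lemma key_integral (hn : 1 ≤ n) :
    (∫ θ in (0:ℝ)..(2 * Real.pi),
      (1 - ((n:ℝ)+1) * Real.cos θ ^ (2*n)) * (Real.sqrt (Sf n θ))⁻¹) = 0 := by
  have hcont : Continuous (fun θ : ℝ =>
      (1 - ((n:ℝ)+1) * Real.cos θ ^ (2*n)) * (Real.sqrt (Sf n θ))⁻¹) :=
    (continuous_const.sub (continuous_const.mul (Real.continuous_cos.pow _))).mul
      (cont_inv_sqrt_Sf n hn)
  rw [intervalIntegral.integral_eq_sub_of_hasDerivAt
      (fun θ _ => hasDeriv_F n hn θ) (hcont.intervalIntegrable _ _)]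
  simp [Real.sin_two_pi]

theorem stmt6' (hn : 1 ≤ n) :
    (∫ θ in (0 : ℝ)..(2 * Real.pi),
        2 * Real.sqrt (∑ k ∈ Finset.range n, Real.cos θ ^ (2 * k)) * Real.sin θ ^ 2)
      = (2 * (n : ℝ) / ((n : ℝ) + 1)) *
        ∫ θ in (0 : ℝ)..(2 * Real.pi),
          (Real.sqrt (∑ k ∈ Finset.range n, Real.cos θ ^ (2 * k)))⁻¹ := by
  show (∫ θ in (0 : ℝ)..(2 * Real.pi), 2 * Real.sqrt (Sf n θ) * Real.sin θ ^ 2)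
      = (2 * (n : ℝ) / ((n : ℝ) + 1)) *
        ∫ θ in (0 : ℝ)..(2 * Real.pi), (Real.sqrt (Sf n θ))⁻¹
  have hn1 : ((n:ℝ) + 1) ≠ 0 := by positivity
  have hfun : ∀ θ : ℝ, 2 * Real.sqrt (Sf n θ) * Real.sin θ ^ 2
      = (2 * (n:ℝ) / ((n:ℝ)+1)) * (Real.sqrt (Sf n θ))⁻¹
        + (2 / ((n:ℝ)+1)) * ((1 - ((n:ℝ)+1) * Real.cos θ ^ (2*n)) * (Real.sqrt (Sf n θ))⁻¹) := by
    intro θ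
    have hg := sqrt_Sf_pos n hn θ
    have hgg := sq_sqrt_Sf n hn θ
    have htel := Sf_mul_sin_sq n θ
    set g := Real.sqrt (Sf n θ) with hgdef
    field_simp
    linear_combination (((n:ℝ)+1) * Real.sin θ ^ 2) * hgg + (((n:ℝ)+1)) * htel
  have heq : (∫ θ in (0 : ℝ)..(2 * Real.pi), 2 * Real.sqrt (Sf n θ) * Real.sin θ ^ 2)
      = ∫ θ in (0 : ℝ)..(2 * Real.pi),
          ((2 * (n:ℝ) / ((n:ℝ)+1)) * (Real.sqrt (Sf n θ))⁻¹
            + (2 / ((n:ℝ)+1)) * ((1 - ((n:ℝ)+1) * Real.cos θ ^ (2*n)) * (Real.sqrt (Sf n θ))⁻¹)) := by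
    apply intervalIntegral.integral_congr
    intro θ _
    exact hfun θ
  have hI1 : IntervalIntegrable
      (fun θ => (2 * (n:ℝ) / ((n:ℝ)+1)) * (Real.sqrt (Sf n θ))⁻¹)
      MeasureTheory.volume 0 (2 * Real.pi) :=
    ((continuous_const.mul (cont_inv_sqrt_Sf n hn))).intervalIntegrable _ _
  have hI2 : IntervalIntegrable
      (fun θ => (2 / ((n:ℝ)+1)) * ((1 - ((n:ℝ)+1) * Real.cos θ ^ (2*n)) * (Real.sqrt (Sf n θ))⁻¹))
      MeasureTheory.volume 0 (2 * Real.pi) :=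
    (continuous_const.mul
      (((continuous_const.sub (continuous_const.mul (Real.continuous_cos.pow _))).mul
        (cont_inv_sqrt_Sf n hn)))).intervalIntegrable _ _
  rw [heq, intervalIntegral.integral_add hI1 hI2,
    intervalIntegral.integral_const_mul, intervalIntegral.integral_const_mul,
    key_integral n hn, mul_zero, add_zero]

end final


theorem stmt6 (n : ℕ) (hn : 1 ≤ n) :
    (∫ θ in (0 : ℝ)..(2 * Real.pi),
        2 * Real.sqrt (∑ k ∈ Finset.range n, Real.cos θ ^ (2 * k)) * Real.sin θ ^ 2)
      = (2 * (n : ℝ) / ((n : ℝ) + 1)) *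
        ∫ θ in (0 : ℝ)..(2 * Real.pi),
          (Real.sqrt (∑ k ∈ Finset.range n, Real.cos θ ^ (2 * k)))⁻¹ := stmt6' n hn
end

section
/- Consider the truncated averaged system dy/ds = (3/2)(γ - 2n/(n+1))·y·(1-y²) - (3/2)·ν·σ·y², where γ ∈ (0,2), γ > 2n/(n+1), ν > 0, σ ∈ (0,1). Then y* = -(1/2)·νσ/(γ - 2n/(n+1)) + sqrt(1 + (1/4)·ν²σ²/(γ - 2n/(n+1))²) is a fixed point in (0,1), and the derivative of the right-hand side at y* is strictly negative (y* is linearly stable). Moreover as ν → 0⁺, y* → 1. -/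
theorem stmt13 (n : ℕ) (hn : 1 ≤ n) (γ σ : ℝ)
    (hγ : 2 * (n : ℝ) / ((n : ℝ) + 1) < γ) (hγ2 : γ < 2)
    (hσ : σ ∈ Set.Ioo (0 : ℝ) 1) (g : ℝ → ℝ → ℝ) (ystar : ℝ → ℝ)
    (hg : ∀ ν y, g ν y = (3 / 2) * (γ - 2 * (n : ℝ) / ((n : ℝ) + 1)) * y * (1 - y ^ 2)
      - (3 / 2) * ν * σ * y ^ 2)
    (hy : ∀ ν, ystar ν = -(1 / 2) * (ν * σ / (γ - 2 * (n : ℝ) / ((n : ℝ) + 1)))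
      + Real.sqrt (1 + (1 / 4) * (ν ^ 2 * σ ^ 2 / (γ - 2 * (n : ℝ) / ((n : ℝ) + 1)) ^ 2))) :
    (∀ ν : ℝ, 0 < ν →
      g ν (ystar ν) = 0 ∧ ystar ν ∈ Set.Ioo (0 : ℝ) 1 ∧ deriv (g ν) (ystar ν) < 0) ∧
    Filter.Tendsto ystar (nhdsWithin 0 (Set.Ioi 0)) (nhds 1) := by
  obtain ⟨a, ha_def⟩ : ∃ a : ℝ, γ - 2 * (n : ℝ) / ((n : ℝ) + 1) = a := ⟨_, rfl⟩
  have ha : 0 < a := ha_def ▸ sub_pos.mpr hγ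
  have hane : a ≠ 0 := ha.ne'
  simp only [ha_def] at hg hy
  constructor
  · intro ν hν
    obtain ⟨b, hb_def⟩ : ∃ b : ℝ, ν * σ = b := ⟨_, rfl⟩
    have hb : 0 < b := hb_def ▸ mul_pos hν hσ.1
    have hg' : ∀ y, g ν y = (3/2) * a * y * (1 - y ^ 2) - (3/2) * b * y ^ 2 := fun y => by
      rw [hg, ← hb_def]; ring
    have harg : (1:ℝ) + (1 / 4) * (ν ^ 2 * σ ^ 2 / a ^ 2) = 1 + (1/4) * (b ^ 2 / a ^ 2) := by
      rw [← hb_def]; ring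
    have hy' : ystar ν = -(1 / 2) * (b / a) + Real.sqrt (1 + (1/4) * (b ^ 2 / a ^ 2)) := by
      rw [hy, harg, hb_def]
    obtain ⟨s, hs_def⟩ : ∃ s : ℝ, Real.sqrt (1 + (1/4) * (b ^ 2 / a ^ 2)) = s := ⟨_, rfl⟩
    have hs0 : 0 ≤ s := hs_def ▸ Real.sqrt_nonneg _
    have hs2 : s ^ 2 = 1 + (1/4) * (b ^ 2 / a ^ 2) := by
      rw [← hs_def, Real.sq_sqrt (by positivity)]
    have hs2' : s ^ 2 * (4 * a ^ 2) = 4 * a ^ 2 + b ^ 2 := by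
      rw [hs2]; field_simp
    rw [hs_def] at hy'
    obtain ⟨y0, hy0_def⟩ : ∃ y0 : ℝ, ystar ν = y0 := ⟨_, rfl⟩
    have hy0 : y0 = -(1/2) * (b / a) + s := by rw [← hy0_def, hy']
    rw [hy0_def]
    -- key algebraic identity
    have key : a * y0 ^ 2 + b * y0 - a = 0 := by
      rw [hy0]
      field_simp
      linear_combination hs2'
    -- y0 > 0
    have hy0pos : 0 < y0 := by
      have h1 : ((1/2) * (b/a)) ^ 2 < s ^ 2 := by
        have e : ((1/2) * (b/a)) ^ 2 = (1/4) * (b^2/a^2) := by ring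
        rw [hs2, e]; linarith
      have h2 : (1/2) * (b/a) < s := lt_of_pow_lt_pow_left₀ 2 hs0 h1
      rw [hy0]; linarith
    -- y0 < 1
    have hy0lt : y0 < 1 := by
      nlinarith [key, mul_pos hb hy0pos, mul_pos ha hy0pos]
    refine ⟨?_, ⟨hy0pos, hy0lt⟩, ?_⟩
    · rw [hg']
      linear_combination (-(3:ℝ)/2 * y0) * key
    · have hfun : g ν = fun y : ℝ => (3/2) * a * y - (3/2) * a * y ^ 3 - (3/2) * b * y ^ 2 := by
        funext y; rw [hg']; ring
      rw [hfun]
      have hd : HasDerivAt (fun y : ℝ => (3/2) * a * y - (3/2) * a * y ^ 3 - (3/2) * b * y ^ 2)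
          ((3/2) * a - (9/2) * a * y0 ^ 2 - 3 * b * y0) y0 := by
        have h1 := (hasDerivAt_id y0).const_mul ((3:ℝ)/2 * a)
        have h3 := (hasDerivAt_pow 3 y0).const_mul ((3:ℝ)/2 * a)
        have h2 := (hasDerivAt_pow 2 y0).const_mul ((3:ℝ)/2 * b)
        have hcomb := (h1.sub h3).sub h2
        convert hcomb using 2 with y
        · rfl
        · rfl
        · rfl
        · rw [show (3:ℕ) - 1 = 2 from rfl]; push_cast; ring
        · rw [show (2:ℕ) - 1 = 1 from rfl]; push_cast; ring
      rw [hd.deriv]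
      nlinarith [key, mul_pos hb hy0pos, mul_pos ha (mul_pos hy0pos hy0pos)]
  · have hc : Continuous fun ν : ℝ => -(1 / 2) * (ν * σ / a)
        + Real.sqrt (1 + (1 / 4) * (ν ^ 2 * σ ^ 2 / a ^ 2)) := by
      apply Continuous.add
      · fun_prop
      · exact Real.continuous_sqrt.comp (by fun_prop)
    have ht : Filter.Tendsto (fun ν : ℝ => -(1 / 2) * (ν * σ / a)
        + Real.sqrt (1 + (1 / 4) * (ν ^ 2 * σ ^ 2 / a ^ 2))) (nhds 0) (nhds 1) := by
      have h0 := hc.tendsto 0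
      simpa using h0
    exact ((ht.mono_left nhdsWithin_le_nhds).congr fun ν => (hy ν).symm)
end

section
/- Let n > 1 be odd, K real with K < 1/n, and ν > 0, and let A₊ = ν/(2n) + sqrt((ν/(2n))² - K), assumed real (and positive). Then the sign of 1 + nK - νA₊ equals the sign of (1+nK)√n - ν; in particular 1 + nK - νA₊ < 0 if and only if ν > (1+nK)√n. -/
set_option maxHeartbeats 1000000


theorem stmt18 (n : ℕ) (hn : 1 < n) (hodd : Odd n) (K ν : ℝ)
    (hK : K < 1 / (n : ℝ)) (hν : 0 < ν) (hdisc : K ≤ (ν / (2 * n)) ^ 2)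
    (A : ℝ) (hA : A = ν / (2 * n) + Real.sqrt ((ν / (2 * n)) ^ 2 - K)) :
    ((0 < 1 + (n : ℝ) * K) →
      ((1 + (n : ℝ) * K - ν * A < 0 ↔ (1 + (n : ℝ) * K) * Real.sqrt n < ν) ∧
       (1 + (n : ℝ) * K - ν * A = 0 ↔ ν = (1 + (n : ℝ) * K) * Real.sqrt n))) ∧
    (1 + (n : ℝ) * K ≤ 0 → 1 + (n : ℝ) * K - ν * A < 0) := by
  have hn0 : (0:ℝ) < n := by positivity
  have hn0' : (n:ℝ) ≠ 0 := ne_of_gt hn0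
  set t := Real.sqrt n with htdef
  have ht0 : 0 < t := Real.sqrt_pos.mpr hn0
  have ht2 : t ^ 2 = n := Real.sq_sqrt hn0.le
  set s := Real.sqrt ((ν / (2 * n)) ^ 2 - K) with hsdef
  have hs0 : 0 ≤ s := Real.sqrt_nonneg _
  have hs2 : s ^ 2 = (ν / (2 * n)) ^ 2 - K :=
    Real.sq_sqrt (by linarith)
  have hAs : A - ν / (2 * n) = s := by rw [hA]; ring
  have hA0 : 0 < A := by
    rw [hA]; have : 0 < ν / (2 * n) := by positivity
    linarith
  have key1 : ν * A = n * A ^ 2 + n * K := by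
    have h1 : (A - ν / (2 * n)) ^ 2 = (ν / (2 * n)) ^ 2 - K := by
      rw [hAs]; exact hs2
    field_simp at h1
    nlinarith [h1]
  have key3 : 1 + (n:ℝ) * K - ν * A = (1 - t * A) * (1 + t * A) := by
    linear_combination A ^ 2 * ht2 - key1
  have key2 : (ν - (1 + (n:ℝ) * K) * t) * A = (A * t - 1) * t * (A - K * t) := by
    linear_combination key1 - (A ^ 2 - K * A * t + K) * ht2
  have hA2K : K ≤ A ^ 2 := by
    have hge : ν / (2 * n) ≤ A := by rw [hA]; linarith
    nlinarith [hν, hn0]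
  have hKt : K * t < A := by
    rcases le_or_gt K 0 with hK0 | hK0
    · nlinarith
    · have hKn : K * (n:ℝ) < 1 := by
        have := (lt_div_iff₀ hn0).mp hK
        linarith
      nlinarith [sq_nonneg (K * t - A), sq_nonneg (K * t + A)]
  have h1tA : 0 < 1 + t * A := by positivity
  have hprod : 0 < t * (A - K * t) := mul_pos ht0 (sub_pos.mpr hKt)
  constructor
  · intro hc
    have fwd : 1 + (n : ℝ) * K - ν * A < 0 → (1 + (n : ℝ) * K) * t < ν := by
      intro h
      rw [key3] at h
      have htA : 1 < t * A := by nlinarith [h1tA]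
      by_contra hcon
      push_neg at hcon
      nlinarith [key2, hprod, hA0]
    have bwd : (1 + (n : ℝ) * K) * t < ν → 1 + (n : ℝ) * K - ν * A < 0 := by
      intro h
      rw [key3]
      have htA : 1 < t * A := by nlinarith [key2, hprod, hA0]
      nlinarith [h1tA]
    refine ⟨⟨fwd, bwd⟩, ?_, ?_⟩
    · intro h
      rw [key3] at h
      have htA : t * A = 1 := by
        rcases mul_eq_zero.mp h with h' | h'
        · linarith
        · linarith
      nlinarith [key2, hprod, hA0]
    · intro h
      rw [key3]
      have hz : (A * t - 1) * (t * (A - K * t)) = 0 := by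
        nlinarith [key2]
      have htA : A * t - 1 = 0 := by
        rcases mul_eq_zero.mp hz with h' | h'
        · exact h'
        · exact absurd h' (ne_of_gt hprod)
      nlinarith
  · intro hc
    have : 0 < ν * A := mul_pos hν hA0
    linarith
end
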